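/- arXiv:1904.00006 — 2 statements merged into one kernel-verified Lean document; each statement's English description precedes it below -/
import Mathlib

section
/- For each tensor slot i ∈ {1,…,k}, each a ∈ {1,…,N}, pairwise distinct λ_1,…,λ_N ∈ ℂ and pairwise distinct z_1,…,z_k ∈ ℂ, the cross terms between the KZ and dynamical operators cancel: [∑_{c=1}^N λ_c e^{(i)}_{cc}, ∑_{b ≠ a} (−1)^{p(b)} (E_{ab}E_{ba} − E_{aa})/(λ_a − λ_b)] + [∑_{j ≠ i} P_{ij}/(z_i − z_j), ∑_{j=1}^k z_j e^{(j)}_{aa}] = 0. -/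
open Finset

namespace Glnm

/-- Parity: `p(a) = 0` for bosonic indices (`a ≤ n` in 1-based terms, i.e. `a.val < n`),
`p(a) = 1` for fermionic ones. -/
def par (n N : ℕ) (a : Fin N) : ℕ := if (a : ℕ) < n then 0 else 1

/-- The Koszul-sign realization `e^{(j)}_{ab} = σ^{p(a)+p(b)} ⊗ ⋯ ⊗ σ^{p(a)+p(b)} ⊗ e_{ab} ⊗ I ⊗ ⋯ ⊗ I`
on `(ℂ^N)^{⊗k}`, realized as matrices indexed by tuples `Fin k → Fin N`. -/
noncomputable def eop (n N k : ℕ) (j : Fin k) (a b : Fin N) :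
    Matrix (Fin k → Fin N) (Fin k → Fin N) ℂ :=
  fun x y =>
    (if x j = a ∧ y j = b then (1 : ℂ) else 0) *
      (-1 : ℂ) ^ ((par n N a + par n N b) *
        ∑ l ∈ Finset.univ.filter (fun l : Fin k => l < j), par n N (x l)) *
      ∏ l ∈ Finset.univ.filter (fun l : Fin k => l ≠ j),
        (if x l = y l then (1 : ℂ) else 0)

/-- `E_{ab} = ∑_{j=1}^k e^{(j)}_{ab}`. -/
noncomputable def Egen (n N k : ℕ) (a b : Fin N) : Matrix (Fin k → Fin N) (Fin k → Fin N) ℂ :=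
  ∑ j : Fin k, eop n N k j a b

/-- The graded permutation `P_{ij} = ∑_{a,b} (−1)^{p(b)} e^{(i)}_{ab} e^{(j)}_{ba}`. -/
noncomputable def Pg (n N k : ℕ) (i j : Fin k) : Matrix (Fin k → Fin N) (Fin k → Fin N) ℂ :=
  ∑ a : Fin N, ∑ b : Fin N,
    ((-1 : ℂ) ^ par n N b) • (eop n N k i a b * eop n N k j b a)

/-- Commutator. -/
def comm {α : Type*} [Ring α] (X Y : α) : α := X * Y - Y * X

/-- Anticommutator. -/
def acomm {α : Type*} [Ring α] (X Y : α) : α := X * Y + Y * X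

/-- The dynamical connection matrix
`A_a = ∑_j z_j e^{(j)}_{aa} + ∑_{b ≠ a} (−1)^{p(b)} (E_{ab}E_{ba} − E_{aa})/(λ_a − λ_b)`. -/
noncomputable def dynA (n N k : ℕ) (z : Fin k → ℂ) (lam : Fin N → ℂ) (a : Fin N) :
    Matrix (Fin k → Fin N) (Fin k → Fin N) ℂ :=
  (∑ j : Fin k, z j • eop n N k j a a) +
    ∑ b ∈ Finset.univ.filter (fun b : Fin N => b ≠ a),
      (((-1 : ℂ) ^ par n N b) / (lam a - lam b)) •
        (Egen n N k a b * Egen n N k b a - Egen n N k a a)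

/-- The (twisted) KZ connection matrix
`B_i = ∑_c λ_c e^{(i)}_{cc} + ∑_{j ≠ i} P_{ij}/(z_i − z_j)`. -/
noncomputable def kzB (n N k : ℕ) (z : Fin k → ℂ) (lam : Fin N → ℂ) (i : Fin k) :
    Matrix (Fin k → Fin N) (Fin k → Fin N) ℂ :=
  (∑ c : Fin N, lam c • eop n N k i c c) +
    ∑ j ∈ Finset.univ.filter (fun j : Fin k => j ≠ i),
      ((z i - z j)⁻¹) • Pg n N k i j

/-- Adjacent graded permutation `P_{s_l} = P_{l,l+1}` (0-based slots). -/
noncomputable def Ps (n N k : ℕ) (l : ℕ) (h : l + 1 < k) :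
    Matrix (Fin k → Fin N) (Fin k → Fin N) ℂ :=
  Pg n N k ⟨l, Nat.lt_of_succ_lt h⟩ ⟨l + 1, h⟩

/-- The highest-configuration vector `e_1 ⊗ ⋯ ⊗ e_N ∈ (ℂ^N)^{⊗N}`. -/
noncomputable def baseVec (N : ℕ) : (Fin N → Fin N) → ℂ :=
  fun x => if x = (fun j => j) then 1 else 0

/-- `Ω^i = ∑_{σ ∈ S_N} (−1)^{i·ℓ(σ)} P_σ (e_1 ⊗ ⋯ ⊗ e_N)`, where `P_σ = ρ σ` for the
(unique) multiplicative extension `ρ` of the adjacent graded permutations. -/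
noncomputable def OmegaVec (N : ℕ) (i : ℕ)
    (ρ : Equiv.Perm (Fin N) →* Matrix (Fin N → Fin N) (Fin N → Fin N) ℂ) :
    (Fin N → Fin N) → ℂ :=
  ∑ σ : Equiv.Perm (Fin N),
    (((Equiv.Perm.sign σ : ℤ) : ℂ) ^ i) • Matrix.mulVec (ρ σ) (baseVec N)

/-- The set of `(z, λ)` with pairwise distinct `z`'s and pairwise distinct `λ`'s. -/
def Usep (N : ℕ) : Set ((Fin N → ℂ) × (Fin N → ℂ)) :=
  {p | (∀ i j : Fin N, i ≠ j → p.1 i ≠ p.1 j) ∧ (∀ a b : Fin N, a ≠ b → p.2 a ≠ p.2 b)}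

end Glnm

open Glnm Finset

namespace CrossAux

variable {n N k : ℕ}

lemma neg_one_pow_congr {s t : ℕ} (h : s % 2 = t % 2) : ((-1 : ℂ)) ^ s = (-1) ^ t := by
  conv_lhs => rw [← Nat.div_add_mod s 2]
  conv_rhs => rw [← Nat.div_add_mod t 2]
  rw [h, pow_add, pow_add, pow_mul, pow_mul]
  norm_num

lemma par_cases (a : Fin N) : par n N a = 0 ∨ par n N a = 1 := by
  unfold par; split_ifs <;> simp

lemma update_iff (x y : Fin k → Fin N) (j : Fin k) (b : Fin N) :
    (y j = b ∧ ∀ l, l ≠ j → x l = y l) ↔ y = Function.update x j b := by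
  constructor
  · rintro ⟨h1, h2⟩
    funext l
    by_cases hl : l = j
    · subst hl; simp [h1]
    · rw [Function.update_of_ne hl]; exact (h2 l hl).symm
  · rintro rfl
    exact ⟨Function.update_self _ _ _, fun l hl => (Function.update_of_ne hl _ _).symm⟩

lemma eop_apply (j : Fin k) (a b : Fin N) (x y : Fin k → Fin N) :
    eop n N k j a b x y =
      if x j = a ∧ y = Function.update x j b then
        (-1 : ℂ) ^ ((par n N a + par n N b) *
          ∑ l ∈ Finset.univ.filter (fun l : Fin k => l < j), par n N (x l))
      else 0 := by
  unfold eop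
  rw [Finset.prod_boole]
  by_cases h : x j = a ∧ y = Function.update x j b
  · obtain ⟨h1, rfl⟩ := h
    rw [if_pos ⟨h1, Function.update_self _ _ _⟩, if_pos, if_pos ⟨h1, rfl⟩]
    · ring
    · intro l hl
      rw [Function.update_of_ne (Finset.mem_filter.mp hl).2]
  · rw [if_neg h]
    by_cases h1 : x j = a ∧ y j = b
    · have h2 : ¬ ∀ l ∈ Finset.univ.filter (fun l : Fin k => l ≠ j), x l = y l := by
        intro hc
        exact h ⟨h1.1, (update_iff x y j b).mp ⟨h1.2, fun l hl =>
          hc l (Finset.mem_filter.mpr ⟨Finset.mem_univ _, hl⟩)⟩⟩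
      rw [if_neg h2, mul_zero]
    · rw [if_neg h1, zero_mul, zero_mul]

end CrossAux
open Glnm Finset

namespace CrossAux

variable {n N k : ℕ}

lemma eop_mul_same (i : Fin k) (a b c d : Fin N) :
    eop n N k i a b * eop n N k i c d =
      if b = c then eop n N k i a d else 0 := by
  ext x w
  rw [Matrix.mul_apply]
  rw [Finset.sum_eq_single (Function.update x i b)]
  · rw [eop_apply, eop_apply]
    have hS : ∑ l ∈ Finset.univ.filter (fun l : Fin k => l < i),
        par n N (Function.update x i b l)
        = ∑ l ∈ Finset.univ.filter (fun l : Fin k => l < i), par n N (x l) := by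
      refine Finset.sum_congr rfl fun l hl => ?_
      rw [Function.update_of_ne (ne_of_lt (Finset.mem_filter.mp hl).2)]
    rw [hS, Function.update_self, Function.update_idem]
    by_cases hbc : b = c
    · subst hbc
      rw [if_pos rfl, eop_apply]
      by_cases hxa : x i = a
      · rw [if_pos ⟨hxa, rfl⟩]
        by_cases hw : w = Function.update x i d
        · rw [if_pos ⟨rfl, hw⟩, if_pos ⟨hxa, hw⟩, ← pow_add]
          apply neg_one_pow_congr
          set S := ∑ l ∈ Finset.univ.filter (fun l : Fin k => l < i), par n N (x l)
          rw [show (par n N a + par n N b) * S + (par n N b + par n N d) * S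
              = (par n N a + par n N d) * S + 2 * (par n N b * S) by ring,
            Nat.add_mul_mod_self_left]
        · rw [if_neg (fun hc => hw hc.2), if_neg (fun hc => hw hc.2), mul_zero]
      · rw [if_neg (fun hc => hxa hc.1), zero_mul, if_neg (fun hc => hxa hc.1)]
    · rw [if_neg hbc, if_neg (fun hc : b = c ∧ _ => hbc hc.1), mul_zero,
        Matrix.zero_apply]
  · intro y _ hy
    rw [eop_apply]
    by_cases hcond : x i = a ∧ y = Function.update x i b
    · exact absurd hcond.2 hy
    · rw [if_neg hcond, zero_mul]
  · intro h; exact absurd (Finset.mem_univ _) h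

end CrossAux
open Glnm Finset

namespace CrossAux

variable {n N k : ℕ}

lemma sum_par_update_of_not_lt (x : Fin k → Fin N) {u t : Fin k} (e : Fin N)
    (h : ¬ u < t) :
    ∑ l ∈ Finset.univ.filter (fun l : Fin k => l < t), par n N (Function.update x u e l)
      = ∑ l ∈ Finset.univ.filter (fun l : Fin k => l < t), par n N (x l) := by
  refine Finset.sum_congr rfl fun l hl => ?_
  rw [Function.update_of_ne]
  intro hh
  exact h (hh ▸ (Finset.mem_filter.mp hl).2)

lemma sum_par_update_of_lt (x : Fin k → Fin N) {u t : Fin k} (e : Fin N)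
    (h : u < t) :
    ∑ l ∈ Finset.univ.filter (fun l : Fin k => l < t), par n N (Function.update x u e l)
      = par n N e +
        ∑ l ∈ (Finset.univ.filter (fun l : Fin k => l < t)).erase u, par n N (x l) := by
  have hu : u ∈ Finset.univ.filter (fun l : Fin k => l < t) := by
    simp [h]
  rw [← Finset.add_sum_erase _ _ hu, Function.update_self]
  congr 1
  refine Finset.sum_congr rfl fun l hl => ?_
  rw [Function.update_of_ne (Finset.mem_erase.mp hl).1]

lemma sum_par_split (x : Fin k → Fin N) {u t : Fin k} (h : u < t) :
    ∑ l ∈ Finset.univ.filter (fun l : Fin k => l < t), par n N (x l)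
      = par n N (x u) +
        ∑ l ∈ (Finset.univ.filter (fun l : Fin k => l < t)).erase u, par n N (x l) := by
  have hu : u ∈ Finset.univ.filter (fun l : Fin k => l < t) := by
    simp [h]
  rw [← Finset.add_sum_erase _ _ hu]

lemma eop_mul_swap {i j : Fin k} (hij : i ≠ j) (a b c d : Fin N) :
    eop n N k i a b * eop n N k j c d =
      ((-1:ℂ) ^ ((par n N a + par n N b) * (par n N c + par n N d))) •
        (eop n N k j c d * eop n N k i a b) := by
  ext x w
  have hL : (eop n N k i a b * eop n N k j c d) x w
      = eop n N k i a b x (Function.update x i b) *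
        eop n N k j c d (Function.update x i b) w := by
    rw [Matrix.mul_apply]
    refine Finset.sum_eq_single_of_mem _ (Finset.mem_univ _) fun y _ hy => ?_
    rw [eop_apply]
    by_cases hc' : x i = a ∧ y = Function.update x i b
    · exact absurd hc'.2 hy
    · rw [if_neg hc', zero_mul]
  have hR : (eop n N k j c d * eop n N k i a b) x w
      = eop n N k j c d x (Function.update x j d) *
        eop n N k i a b (Function.update x j d) w := by
    rw [Matrix.mul_apply]
    refine Finset.sum_eq_single_of_mem _ (Finset.mem_univ _) fun y _ hy => ?_
    rw [eop_apply]
    by_cases hc' : x j = c ∧ y = Function.update x j d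
    · exact absurd hc'.2 hy
    · rw [if_neg hc', zero_mul]
  rw [hL, Matrix.smul_apply, hR]
  rw [eop_apply, eop_apply, eop_apply, eop_apply]
  have hW : Function.update (Function.update x j d) i b
      = Function.update (Function.update x i b) j d :=
    (Function.update_comm hij b d x).symm
  simp only [Function.update_of_ne hij, Function.update_of_ne hij.symm, hW,
    eq_self_iff_true, and_true]
  by_cases hxa : x i = a
  swap
  · rw [if_neg (fun hc => hxa hc), zero_mul,
      if_neg (fun hc : x i = a ∧ _ => hxa hc.1), mul_zero, smul_zero]
  by_cases hxc : x j = c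
  swap
  · rw [if_neg (fun hc : x j = c ∧ _ => hxc hc.1), mul_zero,
      if_neg (fun hc => hxc hc), zero_mul, smul_zero]
  by_cases hw : w = Function.update (Function.update x i b) j d
  swap
  · rw [if_neg (fun hc : _ ∧ _ => hw hc.2), mul_zero,
      if_neg (fun hc : _ ∧ _ => hw hc.2), mul_zero, smul_zero]
  rw [if_pos hxa, if_pos ⟨hxc, hw⟩, if_pos hxc, if_pos ⟨hxa, hw⟩]
  rw [smul_eq_mul, ← pow_add, ← pow_add, ← pow_add]
  apply neg_one_pow_congr
  rcases lt_or_gt_of_ne hij with hlt | hgt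
  · -- i < j
    rw [sum_par_update_of_lt x b hlt, sum_par_split x hlt,
      sum_par_update_of_not_lt x d (not_lt_of_gt hlt), hxa]
    set S := ∑ l ∈ Finset.univ.filter (fun l : Fin k => l < i), par n N (x l)
    set T := ∑ l ∈ (Finset.univ.filter (fun l : Fin k => l < j)).erase i, par n N (x l)
    rw [show (par n N a + par n N b) * (par n N c + par n N d) +
        ((par n N c + par n N d) * (par n N a + T) + (par n N a + par n N b) * S)
        = ((par n N a + par n N b) * S + (par n N c + par n N d) * (par n N b + T))
          + 2 * (par n N a * (par n N c + par n N d)) by ring,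
      Nat.add_mul_mod_self_left]
  · -- j < i
    rw [sum_par_update_of_lt x d hgt, sum_par_split x hgt,
      sum_par_update_of_not_lt x b (not_lt_of_gt hgt), hxc]
    set S := ∑ l ∈ Finset.univ.filter (fun l : Fin k => l < j), par n N (x l)
    set T := ∑ l ∈ (Finset.univ.filter (fun l : Fin k => l < i)).erase j, par n N (x l)
    rw [show (par n N a + par n N b) * (par n N c + par n N d) +
        ((par n N c + par n N d) * S + (par n N a + par n N b) * (par n N d + T))
        = ((par n N a + par n N b) * (par n N c + T) + (par n N c + par n N d) * S)
          + 2 * (par n N d * (par n N a + par n N b)) by ring,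
      Nat.add_mul_mod_self_left]

end CrossAux
open Glnm Finset

namespace CrossAux

variable {n N k : ℕ}

lemma eop_diag_comm {i j : Fin k} (hij : i ≠ j) (c a b : Fin N) :
    eop n N k i c c * eop n N k j a b = eop n N k j a b * eop n N k i c c := by
  rw [eop_mul_swap hij,
    show (par n N c + par n N c) * (par n N a + par n N b)
      = 2 * (par n N c * (par n N a + par n N b)) by ring,
    pow_mul]
  norm_num

lemma comm_sum {α : Type*} [Ring α] {ι : Type*} (s : Finset ι) (X : α) (f : ι → α) :
    comm X (∑ j ∈ s, f j) = ∑ j ∈ s, comm X (f j) := by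
  simp [Glnm.comm, Finset.mul_sum, Finset.sum_mul, Finset.sum_sub_distrib]

lemma comm_smul {α : Type*} [Ring α] (X : α) (c : ℂ) [Module ℂ α] [SMulCommClass ℂ α α]
    [IsScalarTower ℂ α α] (Y : α) : comm X (c • Y) = c • comm X Y := by
  simp [Glnm.comm, mul_smul_comm, smul_mul_assoc, smul_sub]

lemma comm_sub {α : Type*} [Ring α] (X Y Z : α) : comm X (Y - Z) = comm X Y - comm X Z := by
  simp only [Glnm.comm, mul_sub, sub_mul]; abel

lemma comm_mul {α : Type*} [Ring α] (X Y Z : α) :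
    comm X (Y * Z) = comm X Y * Z + Y * comm X Z := by
  simp only [Glnm.comm]; noncomm_ring

lemma sum_comm' {α : Type*} [Ring α] {ι : Type*} (s : Finset ι) (f : ι → α) (X : α) :
    comm (∑ j ∈ s, f j) X = ∑ j ∈ s, comm (f j) X := by
  simp [Glnm.comm, Finset.mul_sum, Finset.sum_mul, Finset.sum_sub_distrib]

lemma smul_comm' {α : Type*} [Ring α] (c : ℂ) [Module ℂ α] [SMulCommClass ℂ α α]
    [IsScalarTower ℂ α α] (X Y : α) : comm (c • X) Y = c • comm X Y := by
  simp [Glnm.comm, mul_smul_comm, smul_mul_assoc, smul_sub]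

end CrossAux
open Glnm Finset

namespace CrossAux

variable {n N k : ℕ}

lemma lam_comm_eop (lam : Fin N → ℂ) (i j : Fin k) (a b : Fin N) :
    comm (∑ c : Fin N, lam c • eop n N k i c c) (eop n N k j a b) =
      if j = i then (lam a - lam b) • eop n N k i a b else 0 := by
  rw [sum_comm']
  by_cases hji : j = i
  · subst hji
    rw [if_pos rfl]
    have key : ∀ c : Fin N, comm (lam c • eop n N k j c c) (eop n N k j a b)
        = (if c = a then lam c • eop n N k j a b else 0)
          - (if c = b then lam c • eop n N k j a b else 0) := by
      intro c
      rw [smul_comm']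
      show lam c • (eop n N k j c c * eop n N k j a b
          - eop n N k j a b * eop n N k j c c) = _
      rw [eop_mul_same, eop_mul_same]
      by_cases h1 : c = a <;> by_cases h2 : c = b
      all_goals simp_all [smul_sub, eq_comm]
    rw [Finset.sum_congr rfl (fun c _ => key c), Finset.sum_sub_distrib,
      Finset.sum_ite_eq' Finset.univ a (fun c => lam c • eop n N k j a b),
      Finset.sum_ite_eq' Finset.univ b (fun c => lam c • eop n N k j a b)]
    simp [sub_smul]
  · rw [if_neg hji]
    refine Finset.sum_eq_zero fun c _ => ?_
    rw [smul_comm']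
    show lam c • (eop n N k i c c * eop n N k j a b
        - eop n N k j a b * eop n N k i c c) = 0
    rw [eop_diag_comm (fun h => hji h.symm), sub_self, smul_zero]

lemma lam_comm_Egen (lam : Fin N → ℂ) (i : Fin k) (a b : Fin N) :
    comm (∑ c : Fin N, lam c • eop n N k i c c) (Egen n N k a b) =
      (lam a - lam b) • eop n N k i a b := by
  unfold Egen
  rw [comm_sum, Finset.sum_congr rfl (fun j _ => lam_comm_eop lam i j a b),
    Finset.sum_ite_eq' Finset.univ i (fun _ => (lam a - lam b) • eop n N k i a b)]
  simp

lemma Pg_mul_eop_i {i j : Fin k} (hij : i ≠ j) (a : Fin N) :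
    Pg n N k i j * eop n N k i a a =
      ∑ c : Fin N, ((-1:ℂ) ^ par n N a) • (eop n N k i c a * eop n N k j a c) := by
  unfold Pg
  rw [Finset.sum_mul]
  refine Finset.sum_congr rfl fun c _ => ?_
  rw [Finset.sum_mul]
  have key : ∀ d : Fin N,
      (((-1:ℂ) ^ par n N d) • (eop n N k i c d * eop n N k j d c)) * eop n N k i a a
      = if d = a then ((-1:ℂ) ^ par n N a) • (eop n N k i c a * eop n N k j a c) else 0 := by
    intro d
    rw [smul_mul_assoc, mul_assoc, ← eop_diag_comm hij a d c, ← mul_assoc,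
      eop_mul_same]
    by_cases hda : d = a
    · subst hda; simp
    · simp [hda]
  rw [Finset.sum_congr rfl (fun d _ => key d),
    Finset.sum_ite_eq' Finset.univ a
      (fun _ => ((-1:ℂ) ^ par n N a) • (eop n N k i c a * eop n N k j a c))]
  simp

lemma eopj_mul_Pg {i j : Fin k} (hij : i ≠ j) (a : Fin N) :
    eop n N k j a a * Pg n N k i j =
      ∑ c : Fin N, ((-1:ℂ) ^ par n N a) • (eop n N k i c a * eop n N k j a c) := by
  unfold Pg
  rw [Finset.mul_sum]
  refine Finset.sum_congr rfl fun c _ => ?_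
  rw [Finset.mul_sum]
  have key : ∀ d : Fin N,
      eop n N k j a a * (((-1:ℂ) ^ par n N d) • (eop n N k i c d * eop n N k j d c))
      = if a = d then ((-1:ℂ) ^ par n N a) • (eop n N k i c a * eop n N k j a c) else 0 := by
    intro d
    rw [mul_smul_comm, ← mul_assoc, eop_diag_comm hij.symm a c d, mul_assoc,
      eop_mul_same]
    by_cases had : a = d
    · subst had; simp
    · simp [had]
  rw [Finset.sum_congr rfl (fun d _ => key d),
    Finset.sum_ite_eq Finset.univ a
      (fun _ => ((-1:ℂ) ^ par n N a) • (eop n N k i c a * eop n N k j a c))]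
  simp

lemma Pg_mul_eop_j {i j : Fin k} (hij : i ≠ j) (a : Fin N) :
    Pg n N k i j * eop n N k j a a =
      ∑ d : Fin N, ((-1:ℂ) ^ par n N d) • (eop n N k i a d * eop n N k j d a) := by
  unfold Pg
  rw [Finset.sum_mul]
  have key : ∀ c d : Fin N,
      (((-1:ℂ) ^ par n N d) • (eop n N k i c d * eop n N k j d c)) * eop n N k j a a
      = if c = a then ((-1:ℂ) ^ par n N d) • (eop n N k i a d * eop n N k j d a) else 0 := by
    intro c d
    rw [smul_mul_assoc, mul_assoc, eop_mul_same]
    by_cases hca : c = a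
    · subst hca; simp
    · simp [hca]
  rw [Finset.sum_congr rfl (fun c _ => by
    rw [Finset.sum_mul, Finset.sum_congr rfl (fun d _ => key c d)])]
  rw [Finset.sum_comm]
  refine Finset.sum_congr rfl fun d _ => ?_
  rw [Finset.sum_ite_eq' Finset.univ a
    (fun _ => ((-1:ℂ) ^ par n N d) • (eop n N k i a d * eop n N k j d a))]
  simp

lemma eopi_mul_Pg {i j : Fin k} (hij : i ≠ j) (a : Fin N) :
    eop n N k i a a * Pg n N k i j =
      ∑ d : Fin N, ((-1:ℂ) ^ par n N d) • (eop n N k i a d * eop n N k j d a) := by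
  unfold Pg
  rw [Finset.mul_sum]
  have key : ∀ c d : Fin N,
      eop n N k i a a * (((-1:ℂ) ^ par n N d) • (eop n N k i c d * eop n N k j d c))
      = if a = c then ((-1:ℂ) ^ par n N d) • (eop n N k i a d * eop n N k j d a) else 0 := by
    intro c d
    rw [mul_smul_comm, ← mul_assoc, eop_mul_same]
    by_cases hac : a = c
    · subst hac; simp
    · simp [hac]
  rw [Finset.sum_congr rfl (fun c _ => by
    rw [Finset.mul_sum, Finset.sum_congr rfl (fun d _ => key c d)])]
  rw [Finset.sum_comm]
  refine Finset.sum_congr rfl fun d _ => ?_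
  rw [Finset.sum_ite_eq Finset.univ a
    (fun _ => ((-1:ℂ) ^ par n N d) • (eop n N k i a d * eop n N k j d a))]
  simp

lemma Pg_comm_eop_i {i j : Fin k} (hij : i ≠ j) (a : Fin N) :
    Pg n N k i j * eop n N k i a a = eop n N k j a a * Pg n N k i j := by
  rw [Pg_mul_eop_i hij, eopj_mul_Pg hij]

lemma Pg_comm_eop_j {i j : Fin k} (hij : i ≠ j) (a : Fin N) :
    Pg n N k i j * eop n N k j a a = eop n N k i a a * Pg n N k i j := by
  rw [Pg_mul_eop_j hij, eopi_mul_Pg hij]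

lemma Pg_comm_eop_other {i j l : Fin k} (hli : l ≠ i) (hlj : l ≠ j) (a : Fin N) :
    Pg n N k i j * eop n N k l a a = eop n N k l a a * Pg n N k i j := by
  unfold Pg
  rw [Finset.sum_mul, Finset.mul_sum]
  refine Finset.sum_congr rfl fun c _ => ?_
  rw [Finset.sum_mul, Finset.mul_sum]
  refine Finset.sum_congr rfl fun d _ => ?_
  rw [smul_mul_assoc, mul_smul_comm, mul_assoc, ← eop_diag_comm hlj a d c,
    ← mul_assoc, ← eop_diag_comm hli a c d, mul_assoc]

end CrossAux
open Glnm Finset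

namespace CrossAux

variable {n N k : ℕ}

lemma comm_def {α : Type*} [Ring α] (X Y : α) : comm X Y = X * Y - Y * X := rfl

lemma key_identity {i j : Fin k} (hij : i ≠ j) (a : Fin N) :
    ∑ b ∈ Finset.univ.filter (fun b : Fin N => b ≠ a),
      ((-1:ℂ) ^ par n N b) •
        (eop n N k i a b * eop n N k j b a - eop n N k j a b * eop n N k i b a)
    = (eop n N k i a a - eop n N k j a a) * Pg n N k i j := by
  have hswap : ∀ b : Fin N,
      ((-1:ℂ) ^ par n N b) • (eop n N k j a b * eop n N k i b a)
      = ((-1:ℂ) ^ par n N a) • (eop n N k i b a * eop n N k j a b) := by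
    intro b
    rw [eop_mul_swap hij.symm a b b a, smul_smul, ← pow_add]
    congr 1
    apply neg_one_pow_congr
    rcases par_cases (n := n) (N := N) a with ha | ha <;>
      rcases par_cases (n := n) (N := N) b with hb | hb <;>
        rw [ha, hb] <;> norm_num
  have h1 : ∑ b ∈ Finset.univ.filter (fun b : Fin N => b ≠ a),
      ((-1:ℂ) ^ par n N b) • (eop n N k i a b * eop n N k j b a)
      = eop n N k i a a * Pg n N k i j
        - ((-1:ℂ) ^ par n N a) • (eop n N k i a a * eop n N k j a a) := by
    rw [Finset.filter_ne', Finset.sum_erase_eq_sub (Finset.mem_univ a),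
      eopi_mul_Pg hij a]
  have h2 : ∑ b ∈ Finset.univ.filter (fun b : Fin N => b ≠ a),
      ((-1:ℂ) ^ par n N b) • (eop n N k j a b * eop n N k i b a)
      = eop n N k j a a * Pg n N k i j
        - ((-1:ℂ) ^ par n N a) • (eop n N k i a a * eop n N k j a a) := by
    rw [Finset.sum_congr rfl (fun b _ => hswap b), Finset.filter_ne',
      Finset.sum_erase_eq_sub (Finset.mem_univ a), eopj_mul_Pg hij a]
  rw [Finset.sum_congr rfl (fun b _ => smul_sub ((-1:ℂ) ^ par n N b) _ _),
    Finset.sum_sub_distrib, h1, h2, sub_mul]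
  abel

end CrossAux
open CrossAux

open Glnm in
/-- the cross terms between the KZ and dynamical operators cancel. -/
theorem kz_dynamical_cross_terms (n m k : ℕ) (hk : 1 ≤ k)
    (z : Fin k → ℂ) (lam : Fin (n + m) → ℂ)
    (hz : ∀ i j : Fin k, i ≠ j → z i ≠ z j)
    (hlam : ∀ a b : Fin (n + m), a ≠ b → lam a ≠ lam b)
    (i : Fin k) (a : Fin (n + m)) :
    comm (∑ c : Fin (n + m), lam c • eop n (n + m) k i c c)
        (∑ b ∈ Finset.univ.filter (fun b : Fin (n + m) => b ≠ a),
          (((-1 : ℂ) ^ par n (n + m) b) / (lam a - lam b)) •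
            (Egen n (n + m) k a b * Egen n (n + m) k b a - Egen n (n + m) k a a)) +
      comm (∑ j ∈ Finset.univ.filter (fun j : Fin k => j ≠ i),
          ((z i - z j)⁻¹) • Pg n (n + m) k i j)
        (∑ j : Fin k, z j • eop n (n + m) k j a a) = 0 := by
  classical
  have hC1 : comm (∑ c : Fin (n + m), lam c • eop n (n + m) k i c c)
      (∑ b ∈ Finset.univ.filter (fun b : Fin (n + m) => b ≠ a),
        (((-1 : ℂ) ^ par n (n + m) b) / (lam a - lam b)) •
          (Egen n (n + m) k a b * Egen n (n + m) k b a - Egen n (n + m) k a a))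
      = ∑ b ∈ Finset.univ.filter (fun b : Fin (n + m) => b ≠ a),
          ((-1 : ℂ) ^ par n (n + m) b) •
            (eop n (n + m) k i a b * Egen n (n + m) k b a
              - Egen n (n + m) k a b * eop n (n + m) k i b a) := by
    rw [comm_sum]
    refine Finset.sum_congr rfl fun b hb => ?_
    have hba : lam a - lam b ≠ 0 :=
      sub_ne_zero_of_ne (hlam a b (Ne.symm (Finset.mem_filter.mp hb).2))
    rw [comm_smul, comm_sub, comm_mul, lam_comm_Egen, lam_comm_Egen, lam_comm_Egen,
      sub_self, zero_smul, sub_zero, smul_mul_assoc, mul_smul_comm,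
      show lam b - lam a = -(lam a - lam b) by ring, neg_smul, ← sub_eq_add_neg,
      ← smul_sub, smul_smul, div_mul_cancel₀ _ hba]
  have hC1' : ∑ b ∈ Finset.univ.filter (fun b : Fin (n + m) => b ≠ a),
        ((-1 : ℂ) ^ par n (n + m) b) •
          (eop n (n + m) k i a b * Egen n (n + m) k b a
            - Egen n (n + m) k a b * eop n (n + m) k i b a)
      = ∑ j' ∈ Finset.univ.erase i,
          (eop n (n + m) k i a a - eop n (n + m) k j' a a) * Pg n (n + m) k i j' := by
    calc ∑ b ∈ Finset.univ.filter (fun b : Fin (n + m) => b ≠ a),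
          ((-1 : ℂ) ^ par n (n + m) b) •
            (eop n (n + m) k i a b * Egen n (n + m) k b a
              - Egen n (n + m) k a b * eop n (n + m) k i b a)
        = ∑ b ∈ Finset.univ.filter (fun b : Fin (n + m) => b ≠ a), ∑ j' : Fin k,
            ((-1 : ℂ) ^ par n (n + m) b) •
              (eop n (n + m) k i a b * eop n (n + m) k j' b a
                - eop n (n + m) k j' a b * eop n (n + m) k i b a) := by
          refine Finset.sum_congr rfl fun b _ => ?_
          simp only [Glnm.Egen]
          rw [Finset.mul_sum, Finset.sum_mul, ← Finset.sum_sub_distrib, Finset.smul_sum]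
      _ = ∑ j' : Fin k, ∑ b ∈ Finset.univ.filter (fun b : Fin (n + m) => b ≠ a),
            ((-1 : ℂ) ^ par n (n + m) b) •
              (eop n (n + m) k i a b * eop n (n + m) k j' b a
                - eop n (n + m) k j' a b * eop n (n + m) k i b a) := Finset.sum_comm
      _ = ∑ j' ∈ Finset.univ.erase i,
            ∑ b ∈ Finset.univ.filter (fun b : Fin (n + m) => b ≠ a),
              ((-1 : ℂ) ^ par n (n + m) b) •
                (eop n (n + m) k i a b * eop n (n + m) k j' b a
                  - eop n (n + m) k j' a b * eop n (n + m) k i b a) := by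
          rw [Finset.sum_erase]
          exact Finset.sum_eq_zero fun b _ => by rw [sub_self, smul_zero]
      _ = ∑ j' ∈ Finset.univ.erase i,
            (eop n (n + m) k i a a - eop n (n + m) k j' a a) * Pg n (n + m) k i j' :=
          Finset.sum_congr rfl fun j' hj' =>
            key_identity (Ne.symm (Finset.mem_erase.mp hj').1) a
  have hC2 : comm (∑ j ∈ Finset.univ.filter (fun j : Fin k => j ≠ i),
        ((z i - z j)⁻¹) • Pg n (n + m) k i j)
      (∑ j : Fin k, z j • eop n (n + m) k j a a)
      = ∑ j ∈ Finset.univ.filter (fun j : Fin k => j ≠ i),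
          (eop n (n + m) k j a a - eop n (n + m) k i a a) * Pg n (n + m) k i j := by
    rw [CrossAux.sum_comm']
    refine Finset.sum_congr rfl fun j hj => ?_
    have hji : j ≠ i := (Finset.mem_filter.mp hj).2
    have hij : i ≠ j := Ne.symm hji
    have hzij : z i - z j ≠ 0 := sub_ne_zero_of_ne (hz i j hij)
    rw [smul_comm', comm_sum]
    rw [← Finset.sum_subset (Finset.subset_univ ({i, j} : Finset (Fin k)))
      (fun l _ hl => by
        simp only [Finset.mem_insert, Finset.mem_singleton] at hl
        push_neg at hl
        rw [comm_smul, comm_def, Pg_comm_eop_other hl.1 hl.2, sub_self, smul_zero])]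
    rw [Finset.sum_pair hij, comm_smul, comm_smul, comm_def, comm_def,
      Pg_comm_eop_i hij, Pg_comm_eop_j hij]
    have hsm : ∀ A B : Matrix (Fin k → Fin (n + m)) (Fin k → Fin (n + m)) ℂ,
        z i • (A - B) + z j • (B - A) = (z i - z j) • (A - B) := fun A B => by module
    rw [hsm, smul_smul, inv_mul_cancel₀ hzij, one_smul, ← sub_mul]
  rw [hC1, hC1', hC2, Finset.filter_ne', ← Finset.sum_add_distrib]
  refine Finset.sum_eq_zero fun j' _ => ?_
  rw [sub_mul, sub_mul]
  abel
end

section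
/- (Theorem 1, second part: the dynamical equations commute with the twisted KZ equations.) For pairwise distinct z_1,…,z_k ∈ ℂ and pairwise distinct λ_1,…,λ_N ∈ ℂ, define the KZ matrices B_i := ∑_{c=1}^N λ_c e^{(i)}_{cc} + ∑_{j ≠ i} P_{ij}/(z_i − z_j) for i = 1,…,k and the dynamical matrices A_a := ∑_{j=1}^k z_j e^{(j)}_{aa} + ∑_{b ≠ a} (−1)^{p(b)} (E_{ab}E_{ba} − E_{aa})/(λ_a − λ_b) for a = 1,…,N. Then [B_i, A_a] = 0 for all i and a; together with ∂A_a/∂z_i = e^{(i)}_{aa} = ∂B_i/∂λ_a, this is the commutativity of the operators κ∂_{z_i} − B_i and κ∂_{λ_a} − A_a. -/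
open Finset

namespace Glnm

variable {n N k : ℕ}

lemma sign_eq {s t : ℕ} (h : s % 2 = t % 2) : (-1:ℂ)^s = (-1)^t := by
  have hs : (-1:ℂ)^s = (-1)^(s % 2) := by
    conv_lhs => rw [← Nat.div_add_mod s 2]
    rw [pow_add, pow_mul, neg_one_sq, one_pow, one_mul]
  have ht : (-1:ℂ)^t = (-1)^(t % 2) := by
    conv_lhs => rw [← Nat.div_add_mod t 2]
    rw [pow_add, pow_mul, neg_one_sq, one_pow, one_mul]
  rw [hs, ht, h]

lemma par_cases (a : Fin N) : par n N a = 0 ∨ par n N a = 1 := by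
  unfold par; split <;> simp

/-- The Koszul sign exponent sum. -/
def Ssum (n N k : ℕ) (x : Fin k → Fin N) (j : Fin k) : ℕ :=
  ∑ l ∈ Finset.univ.filter (fun l : Fin k => l < j), par n N (x l)

lemma eop_apply (j : Fin k) (a b : Fin N) (x u : Fin k → Fin N) :
    eop n N k j a b x u =
      (if x j = a then 1 else 0) *
        (-1:ℂ)^((par n N a + par n N b) * Ssum n N k x j) *
        (if u = Function.update x j b then 1 else 0) := by
  unfold eop Ssum
  by_cases hu : u = Function.update x j b
  · subst hu
    rw [if_pos rfl]
    have h1 : Function.update x j b j = b := Function.update_self j b x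
    have h2 : ∏ l ∈ Finset.univ.filter (fun l : Fin k => l ≠ j),
        (if x l = Function.update x j b l then (1:ℂ) else 0) = 1 := by
      apply Finset.prod_eq_one
      intro l hl
      rw [Finset.mem_filter] at hl
      rw [Function.update_of_ne hl.2, if_pos rfl]
    rw [h1, h2]
    by_cases hx : x j = a
    · simp [hx]
    · simp [hx]
  · rw [if_neg hu, mul_zero]
    by_cases hb : u j = b
    · -- must exist l ≠ j with u l ≠ x l
      have : ∃ l, l ≠ j ∧ ¬ (x l = u l) := by
        by_contra hc
        push_neg at hc
        apply hu
        funext l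
        by_cases hl : l = j
        · subst hl; rw [hb, Function.update_self]
        · rw [Function.update_of_ne hl, ← hc l hl]
      obtain ⟨l, hl, hxl⟩ := this
      have : ∏ l ∈ Finset.univ.filter (fun l : Fin k => l ≠ j),
          (if x l = u l then (1:ℂ) else 0) = 0 := by
        apply Finset.prod_eq_zero (i := l)
        · simp [hl]
        · rw [if_neg hxl]
      rw [this, mul_zero]
    · have : (if x j = a ∧ u j = b then (1:ℂ) else 0) = 0 := by
        rw [if_neg]; tauto
      rw [this, zero_mul, zero_mul]

lemma eop_apply' (j : Fin k) (a b : Fin N) (u y : Fin k → Fin N) :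
    eop n N k j a b u y =
      (if y j = b then 1 else 0) *
        (-1:ℂ)^((par n N a + par n N b) * Ssum n N k y j) *
        (if u = Function.update y j a then 1 else 0) := by
  unfold eop Ssum
  by_cases hu : u = Function.update y j a
  · subst hu
    rw [if_pos rfl]
    have h1 : Function.update y j a j = a := Function.update_self j a y
    have h2 : ∏ l ∈ Finset.univ.filter (fun l : Fin k => l ≠ j),
        (if Function.update y j a l = y l then (1:ℂ) else 0) = 1 := by
      apply Finset.prod_eq_one
      intro l hl
      rw [Finset.mem_filter] at hl
      rw [Function.update_of_ne hl.2, if_pos rfl]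
    have h3 : ∑ l ∈ Finset.univ.filter (fun l : Fin k => l < j),
        par n N (Function.update y j a l) =
        ∑ l ∈ Finset.univ.filter (fun l : Fin k => l < j), par n N (y l) := by
      apply Finset.sum_congr rfl
      intro l hl
      rw [Finset.mem_filter] at hl
      rw [Function.update_of_ne (ne_of_lt hl.2)]
    rw [h1, h2, h3]
    by_cases hy : y j = b
    · simp [hy]
    · simp [hy]
  · rw [if_neg hu, mul_zero]
    by_cases ha : u j = a
    · have : ∃ l, l ≠ j ∧ ¬ (u l = y l) := by
        by_contra hc
        push_neg at hc
        apply hu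
        funext l
        by_cases hl : l = j
        · subst hl; rw [ha, Function.update_self]
        · rw [Function.update_of_ne hl, hc l hl]
      obtain ⟨l, hl, hxl⟩ := this
      have : ∏ l ∈ Finset.univ.filter (fun l : Fin k => l ≠ j),
          (if u l = y l then (1:ℂ) else 0) = 0 := by
        apply Finset.prod_eq_zero (i := l)
        · simp [hl]
        · rw [if_neg hxl]
      rw [this, mul_zero]
    · have : (if u j = a ∧ y j = b then (1:ℂ) else 0) = 0 := by
        rw [if_neg]; tauto
      rw [this, zero_mul, zero_mul]


/-- Partial sum avoiding slot `i`. -/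
def Tsum (n N k : ℕ) (x : Fin k → Fin N) (i j : Fin k) : ℕ :=
  ∑ l ∈ Finset.univ.filter (fun l : Fin k => l < j ∧ l ≠ i), par n N (x l)

lemma Ssum_eq_Tsum (x : Fin k → Fin N) (i j : Fin k) :
    Ssum n N k x j = Tsum n N k x i j + (if i < j then par n N (x i) else 0) := by
  unfold Ssum Tsum
  by_cases hij : i < j
  · rw [if_pos hij]
    have hmem : i ∈ Finset.univ.filter (fun l : Fin k => l < j) := by simp [hij]
    rw [← Finset.sum_erase_add _ _ hmem]
    congr 1
    apply Finset.sum_congr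
    · ext l; simp [Finset.mem_erase, and_comm]
    · intros; rfl
  · rw [if_neg hij, add_zero]
    apply Finset.sum_congr
    · ext l
      simp only [Finset.mem_filter, Finset.mem_univ, true_and]
      constructor
      · intro h; exact ⟨h, fun he => hij (he ▸ h)⟩
      · tauto
    · intros; rfl

lemma Ssum_update (x : Fin k → Fin N) (i j : Fin k) (b : Fin N) :
    Ssum n N k (Function.update x i b) j =
      Tsum n N k x i j + (if i < j then par n N b else 0) := by
  rw [Ssum_eq_Tsum (Function.update x i b) i j, Function.update_self]
  congr 1
  unfold Tsum
  apply Finset.sum_congr rfl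
  intro l hl
  rw [Finset.mem_filter] at hl
  rw [Function.update_of_ne hl.2.2]

lemma Ssum_update_self (x : Fin k → Fin N) (j : Fin k) (b : Fin N) :
    Ssum n N k (Function.update x j b) j = Ssum n N k x j := by
  rw [Ssum_update, Ssum_eq_Tsum x j j]
  simp

lemma mul_eop_left (j : Fin k) (a b : Fin N)
    (M : Matrix (Fin k → Fin N) (Fin k → Fin N) ℂ) (x y : Fin k → Fin N) :
    (eop n N k j a b * M) x y =
      (if x j = a then 1 else 0) *
        (-1:ℂ)^((par n N a + par n N b) * Ssum n N k x j) *
        M (Function.update x j b) y := by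
  rw [Matrix.mul_apply]
  calc ∑ u, eop n N k j a b x u * M u y
      = ∑ u, (if u = Function.update x j b then
          (if x j = a then 1 else 0) *
          (-1:ℂ)^((par n N a + par n N b) * Ssum n N k x j) * M u y else 0) := by
        apply Finset.sum_congr rfl
        intro u _
        rw [eop_apply]
        by_cases hu : u = Function.update x j b <;> simp [hu]
    _ = _ := by rw [Finset.sum_ite_eq' Finset.univ]; simp

lemma mul_eop_right (j : Fin k) (a b : Fin N)
    (M : Matrix (Fin k → Fin N) (Fin k → Fin N) ℂ) (x y : Fin k → Fin N) :
    (M * eop n N k j a b) x y =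
      (if y j = b then 1 else 0) *
        (-1:ℂ)^((par n N a + par n N b) * Ssum n N k y j) *
        M x (Function.update y j a) := by
  rw [Matrix.mul_apply]
  calc ∑ u, M x u * eop n N k j a b u y
      = ∑ u, (if u = Function.update y j a then
          (if y j = b then 1 else 0) *
          (-1:ℂ)^((par n N a + par n N b) * Ssum n N k y j) * M x u else 0) := by
        apply Finset.sum_congr rfl
        intro u _
        rw [eop_apply']
        by_cases hu : u = Function.update y j a <;> simp [hu] <;> ring
    _ = _ := by rw [Finset.sum_ite_eq' Finset.univ]; simp


lemma eop_mul_same (j : Fin k) (a b c d : Fin N) :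
    eop n N k j a b * eop n N k j c d =
      if b = c then eop n N k j a d else 0 := by
  by_cases hbc : b = c
  · subst hbc
    rw [if_pos rfl]
    ext x y
    rw [mul_eop_left, eop_apply, eop_apply, Function.update_self,
      Ssum_update_self, Function.update_idem]
    rw [if_pos rfl, one_mul]
    have hs : (-1:ℂ)^((par n N a + par n N b) * Ssum n N k x j) *
        (-1:ℂ)^((par n N b + par n N d) * Ssum n N k x j) =
        (-1:ℂ)^((par n N a + par n N d) * Ssum n N k x j) := by
      rw [← pow_add]
      apply sign_eq
      rcases par_cases (n := n) (N := N) a with hA | hA <;>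
      rcases par_cases (n := n) (N := N) b with hB | hB <;>
      rcases par_cases (n := n) (N := N) d with hD | hD <;>
      rw [hA, hB, hD] <;> omega
    rw [← hs]
    ring
  · rw [if_neg hbc]
    ext x y
    rw [mul_eop_left, eop_apply, Function.update_self, if_neg hbc]
    simp

lemma eop_mul_ne {i j : Fin k} (hij : i ≠ j) (a b c d : Fin N) :
    eop n N k i a b * eop n N k j c d =
      ((-1:ℂ)^((par n N a + par n N b) * (par n N c + par n N d))) •
        (eop n N k j c d * eop n N k i a b) := by
  ext x y
  rw [Matrix.smul_apply, mul_eop_left, mul_eop_left, eop_apply, eop_apply]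
  rw [Function.update_of_ne (Ne.symm hij), Function.update_of_ne hij]
  rw [Function.update_comm hij]
  by_cases hxa : x i = a
  · by_cases hxc : x j = c
    · rw [if_pos hxa, if_pos hxc, one_mul, one_mul]
      rw [Ssum_update x i j b, Ssum_update x j i d]
      rw [Ssum_eq_Tsum x i j, Ssum_eq_Tsum x j i, hxa, hxc]
      rw [smul_eq_mul]
      by_cases hu : y = Function.update (Function.update x j d) i b
      · rw [if_pos hu, mul_one, mul_one, one_mul, one_mul]
        rw [← pow_add, ← pow_add, ← pow_add]
        apply sign_eq
        rcases lt_or_gt_of_ne hij with ho | ho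
        · rw [if_pos ho, if_pos ho, if_neg (asymm ho), if_neg (asymm ho)]
          rcases par_cases (n := n) (N := N) a with hA | hA <;>
          rcases par_cases (n := n) (N := N) b with hB | hB <;>
          rcases par_cases (n := n) (N := N) c with hC | hC <;>
          rcases par_cases (n := n) (N := N) d with hD | hD <;>
          rw [hA, hB, hC, hD] <;> omega
        · rw [if_pos ho, if_pos ho, if_neg (asymm ho), if_neg (asymm ho)]
          rcases par_cases (n := n) (N := N) a with hA | hA <;>
          rcases par_cases (n := n) (N := N) b with hB | hB <;>
          rcases par_cases (n := n) (N := N) c with hC | hC <;>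
          rcases par_cases (n := n) (N := N) d with hD | hD <;>
          rw [hA, hB, hC, hD] <;> omega
      · rw [if_neg hu, mul_zero, mul_zero, mul_zero]
        ring
    · rw [if_neg hxc]
      simp
  · rw [if_neg hxa]
    simp

lemma sign_one {s : ℕ} (h : s % 2 = 0) : (-1:ℂ)^s = 1 := by
  rw [sign_eq (t := 0) (by omega), pow_zero]

/-- even-parity elements commute across slots -/
lemma eop_comm_diag_ne {i j : Fin k} (hij : i ≠ j) (c a b : Fin N) :
    eop n N k i c c * eop n N k j a b = eop n N k j a b * eop n N k i c c := by
  rw [eop_mul_ne hij]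
  rw [sign_one (by
    rcases par_cases (n := n) (N := N) c with hC | hC <;>
    rcases par_cases (n := n) (N := N) a with hA | hA <;>
    rcases par_cases (n := n) (N := N) b with hB | hB <;>
    rw [hC, hA, hB] <;> omega), one_smul]

lemma commute_diag (i j : Fin k) (c a : Fin N) :
    Commute (eop n N k i c c) (eop n N k j a a) := by
  by_cases hij : i = j
  · subst hij
    unfold Commute SemiconjBy
    by_cases hca : c = a
    · subst hca; rw [eop_mul_same]
    · rw [eop_mul_same, eop_mul_same, if_neg hca, if_neg (Ne.symm hca)]
  · exact eop_comm_diag_ne hij c a a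

lemma Pg_symm {i j : Fin k} (hij : i ≠ j) : Pg n N k i j = Pg n N k j i := by
  unfold Pg
  rw [Finset.sum_comm]
  apply Finset.sum_congr rfl
  intro a _
  apply Finset.sum_congr rfl
  intro b _
  rw [eop_mul_ne hij.symm a b b a, smul_smul]
  congr 1
  rw [← pow_add]
  apply sign_eq
  rcases par_cases (n := n) (N := N) a with hA | hA <;>
  rcases par_cases (n := n) (N := N) b with hB | hB <;>
  rw [hA, hB] <;> omega

lemma Pg_mul_eop {i j : Fin k} (hij : i ≠ j) (a b : Fin N) :
    Pg n N k i j * eop n N k i a b = eop n N k j a b * Pg n N k i j := by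
  unfold Pg
  rw [Finset.sum_mul, Finset.mul_sum]
  apply Finset.sum_congr rfl
  intro c _
  rw [Finset.sum_mul, Finset.mul_sum]
  have hL : ∀ d : Fin N,
      ((-1:ℂ) ^ par n N d • (eop n N k i c d * eop n N k j d c)) * eop n N k i a b
      = if d = a then
          ((-1:ℂ) ^ par n N a *
            (-1:ℂ)^((par n N a + par n N c) * (par n N a + par n N b))) •
            (eop n N k i c b * eop n N k j a c) else 0 := by
    intro d
    rw [smul_mul_assoc, mul_assoc, eop_mul_ne hij.symm d c a b, mul_smul_comm,
      ← mul_assoc, eop_mul_same, smul_smul]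
    by_cases hda : d = a
    · subst hda
      rw [if_pos rfl, if_pos rfl]
    · rw [if_neg hda, if_neg hda, zero_mul, smul_zero]
  have hR : ∀ d : Fin N,
      eop n N k j a b * ((-1:ℂ) ^ par n N d • (eop n N k i c d * eop n N k j d c))
      = if d = b then
          ((-1:ℂ) ^ par n N b *
            (-1:ℂ)^((par n N a + par n N b) * (par n N c + par n N b))) •
            (eop n N k i c b * eop n N k j a c) else 0 := by
    intro d
    rw [mul_smul_comm, ← mul_assoc, eop_mul_ne hij.symm a b c d, smul_mul_assoc,
      mul_assoc, eop_mul_same, smul_smul]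
    by_cases hdb : d = b
    · subst hdb
      rw [if_pos rfl, if_pos rfl]
    · rw [if_neg (fun h => hdb h.symm), if_neg hdb, mul_zero, smul_zero]
  rw [Finset.sum_congr rfl (fun d _ => hL d), Finset.sum_congr rfl (fun d _ => hR d)]
  rw [Finset.sum_ite_eq' Finset.univ, Finset.sum_ite_eq' Finset.univ]
  simp only [Finset.mem_univ, if_true]
  congr 1
  rw [← pow_add, ← pow_add]
  apply sign_eq
  rcases par_cases (n := n) (N := N) a with hA | hA <;>
  rcases par_cases (n := n) (N := N) b with hB | hB <;>
  rcases par_cases (n := n) (N := N) c with hC | hC <;>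
  rw [hA, hB, hC] <;> omega

lemma Pg_mul_eop' {i j : Fin k} (hij : i ≠ j) (a b : Fin N) :
    Pg n N k i j * eop n N k j a b = eop n N k i a b * Pg n N k i j := by
  rw [Pg_symm hij, Pg_mul_eop hij.symm]

lemma Pg_mul_eop_other {i j l : Fin k} (hij : i ≠ j) (hli : l ≠ i) (hlj : l ≠ j)
    (a b : Fin N) :
    Pg n N k i j * eop n N k l a b = eop n N k l a b * Pg n N k i j := by
  unfold Pg
  rw [Finset.sum_mul, Finset.mul_sum]
  apply Finset.sum_congr rfl
  intro c _
  rw [Finset.sum_mul, Finset.mul_sum]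
  apply Finset.sum_congr rfl
  intro d _
  rw [smul_mul_assoc, mul_smul_comm]
  congr 1
  rw [mul_assoc, eop_mul_ne (hlj.symm) d c a b, mul_smul_comm, ← mul_assoc,
    eop_mul_ne (hli.symm) c d a b, smul_mul_assoc, smul_smul, mul_assoc, ← pow_add]
  rw [sign_one (by
    rcases par_cases (n := n) (N := N) a with hA | hA <;>
    rcases par_cases (n := n) (N := N) b with hB | hB <;>
    rcases par_cases (n := n) (N := N) c with hC | hC <;>
    rcases par_cases (n := n) (N := N) d with hD | hD <;>
    rw [hA, hB, hC, hD] <;> omega), one_smul]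

lemma Pg_mul_eop_swap {i j : Fin k} (hij : i ≠ j) (a b : Fin N) (l : Fin k) :
    Pg n N k i j * eop n N k l a b = eop n N k (Equiv.swap i j l) a b * Pg n N k i j := by
  by_cases hli : l = i
  · subst hli; rw [Equiv.swap_apply_left]; exact Pg_mul_eop hij a b
  · by_cases hlj : l = j
    · subst hlj; rw [Equiv.swap_apply_right]; exact Pg_mul_eop' hij a b
    · rw [Equiv.swap_apply_of_ne_of_ne hli hlj]
      exact Pg_mul_eop_other hij hli hlj a b

lemma Pg_mul_Egen {i j : Fin k} (hij : i ≠ j) (a b : Fin N) :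
    Pg n N k i j * Egen n N k a b = Egen n N k a b * Pg n N k i j := by
  unfold Egen
  rw [Finset.mul_sum, Finset.sum_mul]
  rw [Finset.sum_congr rfl (fun l _ => Pg_mul_eop_swap hij a b l)]
  exact Fintype.sum_equiv (Equiv.swap i j) _ _ (fun l => rfl)

lemma eopiaa_mul_Pg {i j : Fin k} (hij : i ≠ j) (a : Fin N) :
    eop n N k i a a * Pg n N k i j =
      ∑ d : Fin N, ((-1:ℂ) ^ par n N d) • (eop n N k i a d * eop n N k j d a) := by
  unfold Pg
  rw [Finset.mul_sum]
  have h1 : ∀ c : Fin N, eop n N k i a a *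
        (∑ d : Fin N, ((-1:ℂ) ^ par n N d) • (eop n N k i c d * eop n N k j d c))
      = if a = c then
          ∑ d : Fin N, ((-1:ℂ) ^ par n N d) • (eop n N k i a d * eop n N k j d c)
        else 0 := by
    intro c
    rw [Finset.mul_sum]
    by_cases hac : a = c
    · rw [if_pos hac]
      subst hac
      apply Finset.sum_congr rfl
      intro d _
      rw [mul_smul_comm, ← mul_assoc, eop_mul_same, if_pos rfl]
    · rw [if_neg hac]
      apply Finset.sum_eq_zero
      intro d _
      rw [mul_smul_comm, ← mul_assoc, eop_mul_same, if_neg hac, zero_mul, smul_zero]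
  rw [Finset.sum_congr rfl (fun c _ => h1 c), Finset.sum_ite_eq Finset.univ a]
  simp

lemma eopjaa_mul_Pg {i j : Fin k} (hij : i ≠ j) (a : Fin N) :
    eop n N k j a a * Pg n N k i j =
      ∑ c : Fin N, ((-1:ℂ) ^ par n N a) • (eop n N k i c a * eop n N k j a c) := by
  unfold Pg
  rw [Finset.mul_sum]
  apply Finset.sum_congr rfl
  intro c _
  rw [Finset.mul_sum]
  have h1 : ∀ d : Fin N,
      eop n N k j a a * (((-1:ℂ) ^ par n N d) • (eop n N k i c d * eop n N k j d c))
      = if a = d then ((-1:ℂ) ^ par n N d) • (eop n N k i c d * eop n N k j a c)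
        else 0 := by
    intro d
    rw [mul_smul_comm, ← mul_assoc, eop_comm_diag_ne hij.symm a c d, mul_assoc,
      eop_mul_same]
    by_cases had : a = d
    · rw [if_pos had, if_pos had]
    · rw [if_neg had, if_neg had, mul_zero, smul_zero]
  rw [Finset.sum_congr rfl (fun d _ => h1 d), Finset.sum_ite_eq Finset.univ a]
  simp

lemma lambda_comm (i : Fin k) (lam : Fin N → ℂ) (a b : Fin N) :
    (∑ c : Fin N, lam c • eop n N k i c c) * Egen n N k a b -
      Egen n N k a b * (∑ c : Fin N, lam c • eop n N k i c c) =
      (lam a - lam b) • eop n N k i a b := by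
  rw [Finset.sum_mul, Finset.mul_sum, ← Finset.sum_sub_distrib]
  have h1 : ∀ c : Fin N,
      (lam c • eop n N k i c c) * Egen n N k a b -
        Egen n N k a b * (lam c • eop n N k i c c)
      = (if c = a then lam c • eop n N k i a b else 0) -
        (if c = b then lam c • eop n N k i a b else 0) := by
    intro c
    rw [smul_mul_assoc, mul_smul_comm, ← smul_sub]
    have h2 : eop n N k i c c * Egen n N k a b - Egen n N k a b * eop n N k i c c
        = (if c = a then eop n N k i a b else 0) -
          (if c = b then eop n N k i a b else 0) := by
      unfold Egen
      rw [Finset.mul_sum, Finset.sum_mul, ← Finset.sum_sub_distrib]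
      rw [Finset.sum_eq_single i (fun l _ hl => by
        rw [eop_comm_diag_ne (Ne.symm hl) c a b, sub_self]) (by simp)]
      rw [eop_mul_same, eop_mul_same]
      split_ifs <;> subst_vars <;> simp_all
    rw [h2, smul_sub]
    congr 1
    · by_cases hca : c = a <;> simp [hca]
    · by_cases hcb : c = b <;> simp [hcb]
  rw [Finset.sum_congr rfl (fun c _ => h1 c), Finset.sum_sub_distrib,
    Finset.sum_ite_eq' Finset.univ, Finset.sum_ite_eq' Finset.univ]
  simp [sub_smul]

lemma key_identity {i j : Fin k} (hij : i ≠ j) (a : Fin N) :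
    (∑ b ∈ Finset.univ.erase a, ((-1:ℂ) ^ par n N b) •
        (eop n N k i a b * eop n N k j b a - eop n N k j a b * eop n N k i b a))
      + (eop n N k j a a - eop n N k i a a) * Pg n N k i j = 0 := by
  rw [sub_mul, eopjaa_mul_Pg hij, eopiaa_mul_Pg hij]
  have hP2 : (∑ d : Fin N, ((-1:ℂ) ^ par n N d) •
        (eop n N k i a d * eop n N k j d a))
      = (∑ d ∈ Finset.univ.erase a, ((-1:ℂ) ^ par n N d) •
          (eop n N k i a d * eop n N k j d a))
        + ((-1:ℂ) ^ par n N a) • (eop n N k i a a * eop n N k j a a) :=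
    (Finset.sum_erase_add _ _ (Finset.mem_univ a)).symm
  have hP1 : (∑ c : Fin N, ((-1:ℂ) ^ par n N a) •
        (eop n N k i c a * eop n N k j a c))
      = (∑ c ∈ Finset.univ.erase a, ((-1:ℂ) ^ par n N a) •
          (eop n N k i c a * eop n N k j a c))
        + ((-1:ℂ) ^ par n N a) • (eop n N k i a a * eop n N k j a a) :=
    (Finset.sum_erase_add _ _ (Finset.mem_univ a)).symm
  have hSy : ∀ b : Fin N, ((-1:ℂ) ^ par n N b) • (eop n N k j a b * eop n N k i b a)
      = ((-1:ℂ) ^ par n N a) • (eop n N k i b a * eop n N k j a b) := by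
    intro b
    rw [eop_mul_ne hij.symm a b b a, smul_smul]
    congr 1
    rw [← pow_add]
    apply sign_eq
    rcases par_cases (n := n) (N := N) a with hA | hA <;>
    rcases par_cases (n := n) (N := N) b with hB | hB <;>
    rw [hA, hB] <;> omega
  rw [hP2, hP1]
  rw [Finset.sum_congr rfl (fun b _ => by rw [smul_sub, hSy b])]
  rw [Finset.sum_sub_distrib]
  abel


end Glnm

set_option maxHeartbeats 1000000 in
open Glnm in
/-- Theorem 1, second part: the dynamical matrices commute with
the twisted KZ matrices, `[B_i, A_a] = 0`. -/
theorem kz_dynamical_commute (n m k : ℕ) (hk : 1 ≤ k)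
    (z : Fin k → ℂ) (lam : Fin (n + m) → ℂ)
    (hz : ∀ i j : Fin k, i ≠ j → z i ≠ z j)
    (hlam : ∀ a b : Fin (n + m), a ≠ b → lam a ≠ lam b)
    (i : Fin k) (a : Fin (n + m)) :
    comm (kzB n (n + m) k z lam i) (dynA n (n + m) k z lam a) = 0 := by
  classical
  unfold Glnm.comm kzB dynA
  rw [Finset.filter_ne', Finset.filter_ne']
  set Λ : Matrix (Fin k → Fin (n+m)) (Fin k → Fin (n+m)) ℂ :=
    ∑ c : Fin (n+m), lam c • eop n (n+m) k i c c with hΛ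
  set Z : Matrix (Fin k → Fin (n+m)) (Fin k → Fin (n+m)) ℂ :=
    ∑ j : Fin k, z j • eop n (n+m) k j a a with hZ
  set Ps : Matrix (Fin k → Fin (n+m)) (Fin k → Fin (n+m)) ℂ :=
    ∑ j ∈ Finset.univ.erase i, (z i - z j)⁻¹ • Pg n (n+m) k i j with hPs
  set Qs : Matrix (Fin k → Fin (n+m)) (Fin k → Fin (n+m)) ℂ :=
    ∑ b ∈ Finset.univ.erase a, (((-1 : ℂ) ^ par n (n+m) b) / (lam a - lam b)) •
      (Egen n (n+m) k a b * Egen n (n+m) k b a - Egen n (n+m) k a a) with hQs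
  have expand : (Λ + Ps) * (Z + Qs) - (Z + Qs) * (Λ + Ps)
      = (Λ*Z - Z*Λ) + (Λ*Qs - Qs*Λ) + ((Ps*Z - Z*Ps) + (Ps*Qs - Qs*Ps)) := by
    noncomm_ring
  rw [expand]
  -- [Λ, Z] = 0
  have h1 : Λ*Z - Z*Λ = 0 := by
    rw [sub_eq_zero]
    have : Commute Λ Z := by
      apply Commute.sum_left
      intro c _
      apply Commute.sum_right
      intro j _
      exact ((commute_diag i j c a).smul_left (lam c)).smul_right (z j)
    exact this.eq
  -- [Ps, Qs] = 0
  have h4 : Ps*Qs - Qs*Ps = 0 := by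
    rw [sub_eq_zero]
    have : Commute Ps Qs := by
      apply Commute.sum_left
      intro j hj
      have hij : i ≠ j := (Finset.ne_of_mem_erase hj).symm
      apply Commute.sum_right
      intro b _
      have hE1 : Commute (Pg n (n+m) k i j) (Egen n (n+m) k a b) :=
        Pg_mul_Egen hij a b
      have hE2 : Commute (Pg n (n+m) k i j) (Egen n (n+m) k b a) :=
        Pg_mul_Egen hij b a
      have hE3 : Commute (Pg n (n+m) k i j) (Egen n (n+m) k a a) :=
        Pg_mul_Egen hij a a
      exact (((hE1.mul_right hE2).sub_right hE3).smul_left _).smul_right _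
    exact this.eq
  -- [Λ, Qs]
  have h2 : Λ*Qs - Qs*Λ = ∑ b ∈ Finset.univ.erase a, ((-1:ℂ) ^ par n (n+m) b) •
      (eop n (n+m) k i a b * Egen n (n+m) k b a -
        Egen n (n+m) k a b * eop n (n+m) k i b a) := by
    rw [hQs, Finset.mul_sum, Finset.sum_mul, ← Finset.sum_sub_distrib]
    apply Finset.sum_congr rfl
    intro b hb
    have hba : b ≠ a := Finset.ne_of_mem_erase hb
    have hlab : lam a - lam b ≠ 0 := sub_ne_zero.mpr (hlam a b (Ne.symm hba))
    rw [mul_smul_comm, smul_mul_assoc, ← smul_sub]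
    have hQ : Λ * (Egen n (n+m) k a b * Egen n (n+m) k b a - Egen n (n+m) k a a) -
        (Egen n (n+m) k a b * Egen n (n+m) k b a - Egen n (n+m) k a a) * Λ
        = (lam a - lam b) • (eop n (n+m) k i a b * Egen n (n+m) k b a -
            Egen n (n+m) k a b * eop n (n+m) k i b a) := by
      have e1 := lambda_comm (n := n) (N := n+m) (k := k) i lam a b
      have e2 := lambda_comm (n := n) (N := n+m) (k := k) i lam b a
      have e3 := lambda_comm (n := n) (N := n+m) (k := k) i lam a a
      calc Λ * (Egen n (n+m) k a b * Egen n (n+m) k b a - Egen n (n+m) k a a) -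
            (Egen n (n+m) k a b * Egen n (n+m) k b a - Egen n (n+m) k a a) * Λ
          = (Λ * Egen n (n+m) k a b - Egen n (n+m) k a b * Λ) * Egen n (n+m) k b a
            + Egen n (n+m) k a b * (Λ * Egen n (n+m) k b a - Egen n (n+m) k b a * Λ)
            - (Λ * Egen n (n+m) k a a - Egen n (n+m) k a a * Λ) := by noncomm_ring
        _ = _ := by
            rw [e1, e2, e3, sub_self, zero_smul, sub_zero, smul_mul_assoc,
              mul_smul_comm, smul_sub]
            rw [show lam b - lam a = -(lam a - lam b) by ring, neg_smul]
            abel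
    rw [hQ, smul_smul, div_mul_cancel₀ _ hlab]
  -- [Ps, Z]
  have h3 : Ps*Z - Z*Ps = ∑ j ∈ Finset.univ.erase i,
      (eop n (n+m) k j a a - eop n (n+m) k i a a) * Pg n (n+m) k i j := by
    rw [hPs, Finset.sum_mul, Finset.mul_sum, ← Finset.sum_sub_distrib]
    apply Finset.sum_congr rfl
    intro j hj
    have hij : i ≠ j := (Finset.ne_of_mem_erase hj).symm
    have hzij : z i - z j ≠ 0 := sub_ne_zero.mpr (hz i j hij)
    rw [smul_mul_assoc, mul_smul_comm, ← smul_sub]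
    have hPZ : Pg n (n+m) k i j * Z - Z * Pg n (n+m) k i j
        = (z i - z j) • ((eop n (n+m) k j a a - eop n (n+m) k i a a) *
            Pg n (n+m) k i j) := by
      rw [hZ, Finset.sum_mul, Finset.mul_sum]
      rw [Finset.sum_congr rfl (fun l _ => by
        rw [mul_smul_comm, Pg_mul_eop_swap hij a a l] :
        ∀ l ∈ Finset.univ, Pg n (n+m) k i j * (z l • eop n (n+m) k l a a) = _)]
      rw [Fintype.sum_equiv (Equiv.swap i j)
        (fun l => z l • (eop n (n+m) k (Equiv.swap i j l) a a * Pg n (n+m) k i j))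
        (fun l => z (Equiv.swap i j l) • (eop n (n+m) k l a a * Pg n (n+m) k i j))
        (fun x => by simp)]
      rw [Finset.sum_congr rfl (fun l _ => smul_mul_assoc (z l)
        (eop n (n+m) k l a a) (Pg n (n+m) k i j) : ∀ l ∈ Finset.univ,
          (z l • eop n (n+m) k l a a) * Pg n (n+m) k i j = _)]
      rw [← Finset.sum_sub_distrib]
      rw [Finset.sum_congr rfl (fun l _ => (sub_smul (z (Equiv.swap i j l)) (z l)
        (eop n (n+m) k l a a * Pg n (n+m) k i j)).symm : ∀ l ∈ Finset.univ, _ = _)]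
      rw [← Finset.sum_subset (Finset.subset_univ {i, j}) (fun x _ hx => by
        rw [Finset.mem_insert, Finset.mem_singleton] at hx
        push_neg at hx
        rw [Equiv.swap_apply_of_ne_of_ne hx.1 hx.2, sub_self, zero_smul])]
      rw [Finset.sum_pair hij, Equiv.swap_apply_left, Equiv.swap_apply_right]
      rw [sub_mul, smul_sub, show z j - z i = -(z i - z j) by ring, neg_smul]
      abel
    rw [hPZ, smul_smul, inv_mul_cancel₀ hzij, one_smul]
  rw [h1, h2, h3, h4, zero_add, add_zero]
  -- final cancellation
  have hfin : ∀ b : Fin (n+m),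
      eop n (n+m) k i a b * Egen n (n+m) k b a -
        Egen n (n+m) k a b * eop n (n+m) k i b a
      = ∑ l ∈ Finset.univ.erase i,
          (eop n (n+m) k i a b * eop n (n+m) k l b a -
            eop n (n+m) k l a b * eop n (n+m) k i b a) := by
    intro b
    unfold Egen
    rw [Finset.mul_sum, Finset.sum_mul, ← Finset.sum_sub_distrib]
    rw [Finset.sum_erase _ (by rw [sub_self])]
  rw [Finset.sum_congr rfl (fun b _ => by rw [hfin b, Finset.smul_sum] :
    ∀ b ∈ Finset.univ.erase a, ((-1:ℂ) ^ par n (n+m) b) •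
      (eop n (n+m) k i a b * Egen n (n+m) k b a -
        Egen n (n+m) k a b * eop n (n+m) k i b a) = _)]
  rw [Finset.sum_comm, ← Finset.sum_add_distrib]
  apply Finset.sum_eq_zero
  intro j hj
  exact key_identity ((Finset.ne_of_mem_erase hj).symm) a
end
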